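/- arXiv:1902.10427 — 3 statements merged into one kernel-verified Lean document; each statement's English description precedes it below -/
import Mathlib

section
/- Let F be a cdf with continuous density f > 0 and F < 1 on [0, r], and suppose the virtual value ψ_F(x) = x − (1−F(x))/f(x) satisfies ψ_F(x) ≤ 0 for all x ∈ [0, r]. Then for every integrable function h : [0, r] → [0, ∞), ∫₀^r ( x·f(x)/(1−F(x)) ) · [ ∫ₓ^r h(t)·f(t) dt − h(x)·(1−F(x)) ] dx ≤ 0. -/
/-!
The hypothesis `ψ_F ≤ 0` says that the weight `x f(x) / (1 - F(x))` lies in `[0, 1]`. Since the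
tail integral `A(x) = ∫ₓ^r h f` is nonnegative, the integrand is therefore at most
`A(x) - x h(x) f(x)`, and this has integral zero: by Fubini, `∫₀^r ∫ₓ^r w = ∫₀^r t w(t) dt`.
-/

open MeasureTheory intervalIntegral Set Function

theorem integral_integral_eq_integral_sub_mul {a b : ℝ} (hab : a ≤ b) {w : ℝ → ℝ}
    (hw : IntegrableOn w (Ioc a b)) :
    ∫ x in a..b, ∫ t in x..b, w t = ∫ t in a..b, (t - a) * w t := by
  let ν := volume.restrict (Ioc a b)
  have h_kernel : Integrable (uncurry fun x t => (Ioi x).indicator w t) (ν.prod ν) := by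
    have h_eq : uncurry (fun x t => (Ioi x).indicator w t)
        = {p : ℝ × ℝ | p.1 < p.2}.indicator fun p => 1 * w p.2 := by
      ext ⟨x, t⟩; simp [indicator_apply]
    rw [h_eq]
    exact ((integrable_const (μ := ν) (1 : ℝ)).mul_prod hw).indicator
      (measurableSet_lt measurable_fst measurable_snd)
  have h_inner_t : ∀ x ∈ Ioc a b, ∫ t, (Ioi x).indicator w t ∂ν = ∫ t in x..b, w t := by
    intro x hx
    rw [setIntegral_indicator measurableSet_Ioi, Ioc_inter_Ioi, sup_eq_right.2 hx.1.le,
      integral_of_le hx.2]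
  have h_inner_x : ∀ t ∈ Ioc a b, ∫ x, (Ioi x).indicator w t ∂ν = (t - a) * w t := by
    intro t ht
    have h_eq : (fun x => (Ioi x).indicator w t) = (Iio t).indicator fun _ => w t := by
      ext x; simp [indicator_apply]
    have h_set : Ioc a b ∩ Iio t = Ioo a t := by
      ext x; simp only [mem_inter_iff, mem_Ioc, mem_Iio, mem_Ioo]
      exact ⟨fun ⟨⟨h₁, _⟩, h₂⟩ => ⟨h₁, h₂⟩, fun ⟨h₁, h₂⟩ => ⟨⟨h₁, h₂.le.trans ht.2⟩, h₂⟩⟩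
    rw [h_eq, setIntegral_indicator measurableSet_Iio, setIntegral_const, h_set,
      Real.volume_real_Ioo_of_le ht.1.le, smul_eq_mul]
  rw [integral_of_le hab, integral_of_le hab, ← setIntegral_congr_fun measurableSet_Ioc h_inner_t,
    ← setIntegral_congr_fun measurableSet_Ioc h_inner_x]
  exact integral_integral_swap h_kernel

theorem integrableOn_Icc_integral_tail {a b : ℝ} (hab : a ≤ b) {w : ℝ → ℝ}
    (hw : IntegrableOn w (Icc a b)) : IntegrableOn (fun x => ∫ t in x..b, w t) (Icc a b) := by
  rw [← uIcc_of_le hab] at hw ⊢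
  exact (continuousOn_primitive_interval_left hw).integrableOn_compact isCompact_uIcc

/-- `ψ ≤ 0` says that the hazard-rate weight `x f / G` is at most `1`. -/
theorem mul_div_mul_sub_le_of_sub_div_nonpos {x f G A y : ℝ} (hx : 0 ≤ x) (hf : 0 < f)
    (hG : 0 < G) (hψ : x - G / f ≤ 0) (hA : 0 ≤ A) :
    x * f / G * (A - y * G) ≤ A - x * (y * f) := by
  have h_weight_le_one : x * f / G ≤ 1 := by
    rw [div_le_one hG, ← le_div_iff₀ hf]
    linarith
  have h_expand : x * f / G * (A - y * G) = x * f / G * A - x * (y * f) := by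
    field_simp
  have h_weight_nonneg : 0 ≤ x * f / G := by positivity
  rw [h_expand]
  nlinarith

/-- Key inequality for local optimality of thresholding: if the virtual value
`ψ_F(x) = x − (1−F(x))/f(x)` is nonpositive on `[0,r]`, then for every integrable
`h : [0,r] → [0,∞)`,
`∫₀^r (x·f(x)/(1−F(x)))·(∫ₓ^r h(t)f(t)dt − h(x)(1−F(x))) dx ≤ 0`. -/
theorem stmt_6 (r : ℝ) (hr : 0 < r) (F f : ℝ → ℝ)
    (hFderiv : ∀ x ∈ Set.Icc 0 r, HasDerivAt F (f x) x)
    (hfcont : ContinuousOn f (Set.Icc 0 r))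
    (hfpos : ∀ x ∈ Set.Icc 0 r, 0 < f x)
    (hF1 : ∀ x ∈ Set.Icc 0 r, F x < 1)
    (hψ : ∀ x ∈ Set.Icc 0 r, x - (1 - F x) / f x ≤ 0)
    (h : ℝ → ℝ) (hnn : ∀ x ∈ Set.Icc 0 r, 0 ≤ h x)
    (hint : IntegrableOn h (Set.Icc 0 r)) :
    ∫ x in (0 : ℝ)..r,
        (x * f x / (1 - F x)) * ((∫ t in x..r, h t * f t) - h x * (1 - F x)) ≤ 0 := by
  have h_icc : ∀ {g : ℝ → ℝ}, IntegrableOn g (Icc 0 r) → IntervalIntegrable g volume 0 r :=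
    (intervalIntegrable_iff_integrableOn_Icc_of_le hr.le).2
  have hF_cont : ContinuousOn F (Icc 0 r) := fun x hx =>
    (hFderiv x hx).continuousAt.continuousWithinAt
  have hw : IntegrableOn (fun t => h t * f t) (Icc 0 r) := hint.mul_continuousOn hfcont isCompact_Icc
  set A : ℝ → ℝ := fun x => ∫ t in x..r, h t * f t
  have hA_int : IntegrableOn A (Icc 0 r) := integrableOn_Icc_integral_tail hr.le hw
  have hA_nonneg : ∀ x ∈ Icc 0 r, 0 ≤ A x := fun x hx => integral_nonneg hx.2 fun t ht =>
    have ht' : t ∈ Icc 0 r := ⟨hx.1.trans ht.1, ht.2⟩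
    mul_nonneg (hnn t ht') (hfpos t ht').le
  have h_weight_cont : ContinuousOn (fun x => x * f x / (1 - F x)) (Icc 0 r) :=
    (continuousOn_id.mul hfcont).div (continuousOn_const.sub hF_cont) fun x hx =>
      (sub_pos.2 (hF1 x hx)).ne'
  have h_moment_int : IntegrableOn (fun t => t * (h t * f t)) (Icc 0 r) :=
    hw.continuousOn_mul continuousOn_id isCompact_Icc
  have h_lhs_int : IntegrableOn (fun x => x * f x / (1 - F x) * (A x - h x * (1 - F x)))
      (Icc 0 r) :=
    (hA_int.sub (hint.mul_continuousOn (continuousOn_const.sub hF_cont) isCompact_Icc)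
      ).continuousOn_mul h_weight_cont isCompact_Icc
  calc _ ≤ ∫ x in 0..r, A x - x * (h x * f x) :=
        integral_mono_on hr.le (h_icc h_lhs_int) (h_icc (hA_int.sub h_moment_int)) fun x hx =>
          mul_div_mul_sub_le_of_sub_div_nonpos hx.1 (hfpos x hx) (sub_pos.2 (hF1 x hx))
            (hψ x hx) (hA_nonneg x hx)
    _ = 0 := by
      rw [integral_sub (h_icc hA_int) (h_icc h_moment_int),
        integral_integral_eq_integral_sub_mul hr.le (hw.mono_set Ioc_subset_Icc_self)]
      simp only [sub_zero, sub_self]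
end

section
/- Let F be a continuously differentiable cdf with density f > 0 and F < 1 on [0, r] with 0 < r < 1, and assume ψ_F(x) = x − (1−F(x))/f(x) ≤ 0 on [0, r]. Let h : [0, r] → [0, ∞) satisfy h(0) = h(r) = 0, and define β(x; h) = ( (1/(1−F(x))²) · [ r²·(1−F(r))² + 2·( ∫ₓ^r h(t)·f(t) dt − h(x)·(1−F(x)) ) ] )^{1/2}, assuming the bracket is nonnegative and β(x; h) ≤ 1 on [0, r]. Then ∫₀^r x·β(x; h)·f(x) dx ≤ ∫₀^r x·β(x; 0)·f(x) dx, where β(x; 0) = r·(1−F(r))/(1−F(x)) is the thresholded strategy. In other words, thresholding is globally optimal among such strategies when the competition's cdf is G(x) = min(x, 1). -/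
/-!
With `S = 1 - F`, `c = r S(r)` and `D(x) = ∫ₓ^r h f - h(x) S(x)`, the bid is
`β(x;h) = √(c² + 2 D(x)) / S(x)`, and the tangent-line bound `√(c² + 2D) ≤ c + D / c` gives
`x β(x;h) f(x) ≤ x β(x;0) f(x) + w(x) D(x) / c` with `w = x f / S`. Since
`w D = w ∫ₓ^r h f - x h f`, Fubini turns `∫₀^r w D` into `∫₀^r (W(t) - t) h(t) f(t) dt` with
`W(t) = ∫₀^t w`. Finally `ψ_F ≤ 0` says exactly `w ≤ 1`, so `W(t) ≤ t` and the correction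
term is nonpositive.
-/

open MeasureTheory intervalIntegral Set

theorem Real.sqrt_sq_add_two_mul_le {a d : ℝ} (ha : 0 < a) (had : 0 ≤ a ^ 2 + 2 * d) :
    √(a ^ 2 + 2 * d) ≤ a + d / a := by
  have hda : d / a * a = d := div_mul_cancel₀ d ha.ne'
  rw [Real.sqrt_le_iff]
  constructor
  · nlinarith
  · nlinarith [sq_nonneg (d / a)]

theorem mul_sqrt_one_div_sq_mul_le {x y s a H k : ℝ} (hx : 0 ≤ x) (hy : 0 ≤ y) (hs : 0 < s)
    (ha : 0 < a) (hbr : 0 ≤ a ^ 2 + 2 * (H - k * s)) :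
    x * √(1 / s ^ 2 * (a ^ 2 + 2 * (H - k * s))) * y
      ≤ x * (a / s) * y + (x * y / s * H - x * (k * y)) / a := by
  have hsqrt : √(1 / s ^ 2 * (a ^ 2 + 2 * (H - k * s))) ≤ (a + (H - k * s) / a) / s := by
    rw [Real.sqrt_mul (by positivity), Real.sqrt_div' _ (by positivity), Real.sqrt_one,
      Real.sqrt_sq hs.le, one_div_mul_eq_div]
    exact div_le_div_of_nonneg_right (Real.sqrt_sq_add_two_mul_le ha hbr) hs.le
  calc x * √(1 / s ^ 2 * (a ^ 2 + 2 * (H - k * s))) * y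
      ≤ x * ((a + (H - k * s) / a) / s) * y := by gcongr
    _ = x * (a / s) * y + (x * y / s * H - x * (k * y)) / a := by field_simp

theorem mul_div_le_one_of_sub_div_nonpos {x y s : ℝ} (hy : 0 < y) (hs : 0 < s)
    (h : x - s / y ≤ 0) : x * y / s ≤ 1 := by
  rw [sub_nonpos, le_div_iff₀ hy] at h
  exact div_le_one_of_le₀ h hs.le

theorem integral_mul_integral_tail_eq {w g : ℝ → ℝ} {a b : ℝ} (hab : a ≤ b)
    (hw : IntervalIntegrable w volume a b) (hg : IntervalIntegrable g volume a b) :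
    ∫ x in a..b, w x * ∫ t in x..b, g t = ∫ t in a..b, (∫ x in a..t, w x) * g t := by
  rw [integral_of_le hab, integral_of_le hab]
  set k : ℝ × ℝ → ℝ := {p | p.1 ≤ p.2}.indicator fun p => w p.1 * g p.2
  have hk : Integrable k ((volume.restrict (Ioc a b)).prod (volume.restrict (Ioc a b))) :=
    (hw.1.mul_prod hg.1).indicator (measurableSet_le measurable_fst measurable_snd)
  calc ∫ x in Ioc a b, w x * ∫ t in x..b, g t
      = ∫ x in Ioc a b, ∫ t in Ioc a b, k (x, t) := by
        refine setIntegral_congr_fun measurableSet_Ioc fun x hx => ?_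
        have hslice : (fun t => k (x, t)) = (Ici x).indicator fun t => w x * g t := by
          ext t; simp [k, indicator_apply]
        have hsets : Ioc a b ∩ Ici x = Icc x b := by
          ext t; simp only [mem_inter_iff, mem_Ioc, mem_Ici, mem_Icc]
          constructor
          · rintro ⟨⟨-, htb⟩, hxt⟩; exact ⟨hxt, htb⟩
          · rintro ⟨hxt, htb⟩; exact ⟨⟨hx.1.trans_le hxt, htb⟩, hxt⟩
        rw [hslice, setIntegral_indicator measurableSet_Ici, hsets,
          MeasureTheory.integral_const_mul, integral_Icc_eq_integral_Ioc, ← integral_of_le hx.2]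
    _ = ∫ t in Ioc a b, ∫ x in Ioc a b, k (x, t) := integral_integral_swap hk
    _ = ∫ t in Ioc a b, (∫ x in a..t, w x) * g t := by
        refine setIntegral_congr_fun measurableSet_Ioc fun t ht => ?_
        have hslice : (fun x => k (x, t)) = (Iic t).indicator fun x => w x * g t := by
          ext x; simp [k, indicator_apply]
        rw [hslice, setIntegral_indicator measurableSet_Iic, Ioc_inter_Iic,
          inf_eq_right.2 ht.2, MeasureTheory.integral_mul_const, ← integral_of_le ht.1.le]

theorem integral_mul_integral_tail_le {w g : ℝ → ℝ} {a b : ℝ} (hab : a ≤ b)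
    (hw : IntervalIntegrable w volume a b) (hw1 : ∀ x ∈ Icc a b, w x ≤ 1)
    (hg : IntervalIntegrable g volume a b) (hg0 : ∀ x ∈ Icc a b, 0 ≤ g x) :
    ∫ x in a..b, w x * ∫ t in x..b, g t ≤ ∫ t in a..b, (t - a) * g t := by
  rw [integral_mul_integral_tail_eq hab hw hg]
  have hW : ContinuousOn (fun t => ∫ x in a..t, w x) (uIcc a b) :=
    continuousOn_primitive_interval' hw left_mem_uIcc
  refine integral_mono_on hab (hg.continuousOn_mul hW)
    (hg.continuousOn_mul (continuousOn_id.sub continuousOn_const)) fun t ht => ?_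
  refine mul_le_mul_of_nonneg_right ?_ (hg0 t ht)
  calc ∫ x in a..t, w x ≤ ∫ _ in a..t, (1 : ℝ) :=
        integral_mono_on ht.1 (hw.mono_set (uIcc_subset_uIcc_left (uIcc_of_le hab ▸ ht)))
          intervalIntegrable_const fun x hx => hw1 x ⟨hx.1, hx.2.trans ht.2⟩
    _ = t - a := by simp

theorem integral_le_of_le_add_of_integral_nonpos {u v e : ℝ → ℝ} {a b : ℝ} (hab : a ≤ b)
    (hu : ∀ x ∈ Icc a b, 0 ≤ u x) (huv : ∀ x ∈ Icc a b, u x ≤ v x + e x)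
    (hv : IntervalIntegrable v volume a b) (he : IntervalIntegrable e volume a b)
    (he0 : ∫ x in a..b, e x ≤ 0) :
    ∫ x in a..b, u x ≤ ∫ x in a..b, v x := by
  have hmono : ∫ x in a..b, u x ≤ ∫ x in a..b, (v x + e x) := by
    rw [integral_of_le hab, integral_of_le hab]
    exact integral_mono_of_nonneg
      (ae_restrict_of_forall_mem measurableSet_Ioc fun x hx => hu x (Ioc_subset_Icc_self hx))
      (hv.add he).1
      (ae_restrict_of_forall_mem measurableSet_Ioc fun x hx => huv x (Ioc_subset_Icc_self hx))
  rw [integral_add hv he] at hmono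
  linarith

theorem stmt_8_general (r : ℝ) (hr0 : 0 < r) (F f : ℝ → ℝ)
    (hFderiv : ∀ x ∈ Set.Icc 0 r, HasDerivAt F (f x) x)
    (hfcont : ContinuousOn f (Set.Icc 0 r))
    (hfpos : ∀ x ∈ Set.Icc 0 r, 0 < f x)
    (hF1 : ∀ x ∈ Set.Icc 0 r, F x < 1)
    (hψ : ∀ x ∈ Set.Icc 0 r, x - (1 - F x) / f x ≤ 0)
    (h : ℝ → ℝ) (hnn : ∀ x ∈ Set.Icc 0 r, 0 ≤ h x)
    (hint : IntegrableOn h (Set.Icc 0 r))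
    (βh : ℝ → ℝ)
    (hβh : ∀ x ∈ Set.Icc 0 r,
      βh x = Real.sqrt ((1 / (1 - F x) ^ 2) *
        (r ^ 2 * (1 - F r) ^ 2 + 2 * ((∫ t in x..r, h t * f t) - h x * (1 - F x)))))
    (hbracket : ∀ x ∈ Set.Icc 0 r,
      0 ≤ r ^ 2 * (1 - F r) ^ 2 + 2 * ((∫ t in x..r, h t * f t) - h x * (1 - F x))) :
    (∫ x in (0 : ℝ)..r, x * βh x * f x)
      ≤ ∫ x in (0 : ℝ)..r, x * (r * (1 - F r) / (1 - F x)) * f x := by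
  set c := r * (1 - F r)
  set w : ℝ → ℝ := fun x => x * f x / (1 - F x)
  set H : ℝ → ℝ := fun x => ∫ t in x..r, h t * f t
  have hS : ∀ x ∈ Icc 0 r, 0 < 1 - F x := fun x hx => sub_pos.2 (hF1 x hx)
  have hc : 0 < c := mul_pos hr0 (hS r ⟨hr0.le, le_rfl⟩)
  have hScont : ContinuousOn (fun x => 1 - F x) (Icc 0 r) :=
    continuousOn_const.sub fun x hx => (hFderiv x hx).continuousAt.continuousWithinAt
  have hwcont : ContinuousOn w (Icc 0 r) :=
    (continuousOn_id.mul hfcont).div hScont fun x hx => (hS x hx).ne'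
  have hhf : IntegrableOn (fun t => h t * f t) (uIcc 0 r) :=
    uIcc_of_le hr0.le ▸ hint.mul_continuousOn hfcont isCompact_Icc
  have hHcont : ContinuousOn H (Icc 0 r) :=
    uIcc_of_le hr0.le ▸ continuousOn_primitive_interval_left hhf
  have hwH_int : IntervalIntegrable (fun x => w x * H x) volume 0 r :=
    (hwcont.mul hHcont).intervalIntegrable_of_Icc hr0.le
  have hxhf_int : IntervalIntegrable (fun x => x * (h x * f x)) volume 0 r :=
    hhf.intervalIntegrable.continuousOn_mul continuousOn_id
  have hwH_le : ∫ x in 0..r, w x * H x ≤ ∫ x in 0..r, x * (h x * f x) := by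
    simpa using integral_mul_integral_tail_le hr0.le (hwcont.intervalIntegrable_of_Icc hr0.le)
      (fun x hx => mul_div_le_one_of_sub_div_nonpos (hfpos x hx) (hS x hx) (hψ x hx))
      hhf.intervalIntegrable fun x hx => mul_nonneg (hnn x hx) (hfpos x hx).le
  refine integral_le_of_le_add_of_integral_nonpos
    (e := fun x => (w x * H x - x * (h x * f x)) / c) hr0.le (fun x hx => ?_) (fun x hx => ?_) ?_
    ((hwH_int.sub hxhf_int).div_const c) ?_
  · exact mul_nonneg (mul_nonneg hx.1 (hβh x hx ▸ Real.sqrt_nonneg _)) (hfpos x hx).le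
  · have := mul_sqrt_one_div_sq_mul_le hx.1 (hfpos x hx).le (hS x hx) hc
      (by rw [mul_pow]; exact hbracket x hx)
    rwa [mul_pow, ← hβh x hx] at this
  · exact ((continuousOn_id.mul (continuousOn_const.div hScont fun x hx => (hS x hx).ne')).mul
      hfcont).intervalIntegrable_of_Icc hr0.le
  · rw [intervalIntegral.integral_div, integral_sub hwH_int hxhf_int]
    exact div_nonpos_of_nonpos_of_nonneg (sub_nonpos.2 hwH_le) hc.le

/-- **Global optimality of thresholding against Uniform[0,1] competition.**
If `ψ_F ≤ 0` on `[0,r]` with `0 < r < 1`, and `β(·;h)` is the strategy with seller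
revenue `−h` on `[x,r]` (with `h ≥ 0`, `h(0) = h(r) = 0`), assumed bounded by 1 with a
nonnegative bracket, then the buyer utility `∫₀^r x·β(x;h)·f(x) dx` is at most the one of
the thresholded strategy `β(x;0) = r(1−F(r))/(1−F(x))`. -/
theorem stmt_8 (r : ℝ) (hr0 : 0 < r) (hr1 : r < 1) (F f : ℝ → ℝ)
    (hFderiv : ∀ x ∈ Set.Icc 0 r, HasDerivAt F (f x) x)
    (hfcont : ContinuousOn f (Set.Icc 0 r))
    (hfpos : ∀ x ∈ Set.Icc 0 r, 0 < f x)
    (hF1 : ∀ x ∈ Set.Icc 0 r, F x < 1)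
    (hψ : ∀ x ∈ Set.Icc 0 r, x - (1 - F x) / f x ≤ 0)
    (h : ℝ → ℝ) (hnn : ∀ x ∈ Set.Icc 0 r, 0 ≤ h x)
    (h0 : h 0 = 0) (hhr : h r = 0)
    (hint : IntegrableOn h (Set.Icc 0 r))
    (βh : ℝ → ℝ)
    (hβh : ∀ x ∈ Set.Icc 0 r,
      βh x = Real.sqrt ((1 / (1 - F x) ^ 2) *
        (r ^ 2 * (1 - F r) ^ 2 + 2 * ((∫ t in x..r, h t * f t) - h x * (1 - F x)))))
    (hbracket : ∀ x ∈ Set.Icc 0 r,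
      0 ≤ r ^ 2 * (1 - F r) ^ 2 + 2 * ((∫ t in x..r, h t * f t) - h x * (1 - F x)))
    (hle1 : ∀ x ∈ Set.Icc 0 r, βh x ≤ 1) :
    (∫ x in (0 : ℝ)..r, x * βh x * f x)
      ≤ ∫ x in (0 : ℝ)..r, x * (r * (1 - F r) / (1 - F x)) * f x :=
  stmt_8_general r hr0 F f hFderiv hfcont hfpos hF1 hψ h hnn hint βh hβh hbracket
end

section
/- Let F be a continuously differentiable cdf with density f > 0 on [0, x₀], let C > 0 and β(y) = C/(1−F(y)), and let G be a continuously differentiable cdf with density g. If the virtual value ψ_F(y) = y − (1−F(y))/f(y) satisfies ψ_F(y) ≤ 0 on [0, x₀], then for every x ∈ [0, x₀], ∫₀^x ( y·f(y)/(1−F(y)) ) · g(β(y)) dy ≤ (1/C) · x · (1−F(x)) · G(β(x)). -/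
open MeasureTheory intervalIntegral

/-!
With `β = C / (1 - F)`, the right-hand side `φ(y) = y (1 - F y) G (β y) / C` has derivative
`((1 - F y) - y f y) G (β y) / C + (y f y / (1 - F y)) g (β y)`, because `β' = β f / (1 - F)`.
The virtual value condition `ψ_F ≤ 0` says exactly `y f y ≤ 1 - F y`, so, as `G ≥ 0`, the first
summand is nonnegative and the integrand is bounded by `φ'`. Integrating from `0`, where `φ`
vanishes, gives the bound.
-/

section Thresholding

variable {F f G g : ℝ → ℝ} {C y : ℝ}

theorem mul_le_one_sub_of_virtualValue_nonpos (hf : 0 < f y)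
    (hψ : y - (1 - F y) / f y ≤ 0) : y * f y ≤ 1 - F y :=
  (le_div_iff₀ hf).1 (sub_nonpos.1 hψ)

theorem hasDerivAt_thresholdPayoff (hC : C ≠ 0) (hF : HasDerivAt F (f y) y) (hF1 : F y ≠ 1)
    (hG : HasDerivAt G (g (C / (1 - F y))) (C / (1 - F y))) :
    HasDerivAt (fun y => 1 / C * y * (1 - F y) * G (C / (1 - F y)))
      (1 / C * ((1 - F y) - y * f y) * G (C / (1 - F y))
        + y * f y / (1 - F y) * g (C / (1 - F y))) y := by
  have hne : 1 - F y ≠ 0 := sub_ne_zero.2 hF1.symm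
  have hsurv : HasDerivAt (fun y => 1 - F y) (-f y) y := by simpa using hF.const_sub 1
  have hβ : HasDerivAt (fun y => C / (1 - F y)) (C * f y / (1 - F y) ^ 2) y :=
    ((hasDerivAt_const y C).div hsurv hne).congr_deriv (by ring)
  refine ((((hasDerivAt_id y).const_mul (1 / C)).mul hsurv).mul (hG.comp y hβ)).congr_deriv ?_
  simp only [id, Function.comp_apply, Pi.mul_apply]
  field_simp
  ring

theorem continuousOn_thresholdIntegrand {s : Set ℝ} (hF : ContinuousOn F s)
    (hf : ContinuousOn f s) (hF1 : ∀ y ∈ s, F y ≠ 1) (hg : Continuous g) :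
    ContinuousOn (fun y => y * f y / (1 - F y) * g (C / (1 - F y))) s := by
  have hne : ∀ y ∈ s, 1 - F y ≠ 0 := fun y hy => sub_ne_zero.2 (hF1 y hy).symm
  have hsurv : ContinuousOn (fun y => 1 - F y) s := continuousOn_const.sub hF
  exact ((continuousOn_id.mul hf).div hsurv hne).mul
    (hg.comp_continuousOn (continuousOn_const.div hsurv hne))

end Thresholding

theorem stmt_10_general (x₀ : ℝ) (F f : ℝ → ℝ)
    (hFderiv : ∀ y ∈ Set.Icc 0 x₀, HasDerivAt F (f y) y)
    (hfcont : ContinuousOn f (Set.Icc 0 x₀))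
    (hfpos : ∀ y ∈ Set.Icc 0 x₀, 0 < f y)
    (hF1 : ∀ y ∈ Set.Icc 0 x₀, F y < 1)
    (C : ℝ) (hC : 0 < C)
    (β : ℝ → ℝ) (hβ : ∀ y, β y = C / (1 - F y))
    (G g : ℝ → ℝ) (hGderiv : ∀ u, HasDerivAt G (g u) u) (hgcont : Continuous g)
    (hGnn : ∀ u, 0 ≤ G u)
    (hψ : ∀ y ∈ Set.Icc 0 x₀, y - (1 - F y) / f y ≤ 0) :
    ∀ x ∈ Set.Icc 0 x₀,
      (∫ y in (0 : ℝ)..x, (y * f y / (1 - F y)) * g (β y))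
        ≤ (1 / C) * x * (1 - F x) * G (β x) := by
  obtain rfl : β = fun y => C / (1 - F y) := funext hβ
  rintro x ⟨hx0, hxx₀⟩
  have hsub : Set.Icc 0 x ⊆ Set.Icc 0 x₀ := Set.Icc_subset_Icc le_rfl hxx₀
  have hF1ne : ∀ y ∈ Set.Icc 0 x₀, F y ≠ 1 := fun y hy => (hF1 y hy).ne
  have hφ : ∀ y ∈ Set.Icc 0 x, HasDerivAt _ _ y := fun y hy =>
    hasDerivAt_thresholdPayoff hC.ne' (hFderiv y (hsub hy)) (hF1ne y (hsub hy)) (hGderiv _)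
  have hFcont : ContinuousOn F (Set.Icc 0 x₀) :=
    fun y hy => (hFderiv y hy).continuousAt.continuousWithinAt
  have hbound := integral_le_sub_of_hasDeriv_right_of_le hx0
    (fun y hy => (hφ y hy).continuousAt.continuousWithinAt)
    (fun y hy => (hφ y (Set.Ioo_subset_Icc_self hy)).hasDerivWithinAt)
    ((continuousOn_thresholdIntegrand hFcont hfcont hF1ne hgcont).mono hsub).integrableOn_Icc
    fun y hy => by
      have hy' := hsub (Set.Ioo_subset_Icc_self hy)
      have hvv := mul_le_one_sub_of_virtualValue_nonpos (hfpos y hy') (hψ y hy')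
      exact le_add_of_nonneg_left <|
        mul_nonneg (mul_nonneg (one_div_nonneg.2 hC.le) (sub_nonneg.2 hvv)) (hGnn _)
  simpa using hbound

/-- Integration-by-parts bound for the thresholding strategy `β(y) = C/(1−F(y))`:
if `ψ_F ≤ 0` on `[0,x₀]` then for every `x ∈ [0,x₀]`,
`∫₀^x (y·f(y)/(1−F(y)))·g(β(y)) dy ≤ (1/C)·x·(1−F(x))·G(β(x))`. -/
theorem stmt_10 (x₀ : ℝ) (hx₀ : 0 ≤ x₀) (F f : ℝ → ℝ)
    (hFderiv : ∀ y ∈ Set.Icc 0 x₀, HasDerivAt F (f y) y)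
    (hfcont : ContinuousOn f (Set.Icc 0 x₀))
    (hfpos : ∀ y ∈ Set.Icc 0 x₀, 0 < f y)
    (hF1 : ∀ y ∈ Set.Icc 0 x₀, F y < 1)
    (C : ℝ) (hC : 0 < C)
    (β : ℝ → ℝ) (hβ : ∀ y, β y = C / (1 - F y))
    (G g : ℝ → ℝ) (hGderiv : ∀ u, HasDerivAt G (g u) u) (hgcont : Continuous g)
    (hGmono : Monotone G) (hGnn : ∀ u, 0 ≤ G u) (hGle : ∀ u, G u ≤ 1)
    (hψ : ∀ y ∈ Set.Icc 0 x₀, y - (1 - F y) / f y ≤ 0) :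
    ∀ x ∈ Set.Icc 0 x₀,
      (∫ y in (0 : ℝ)..x, (y * f y / (1 - F y)) * g (β y))
        ≤ (1 / C) * x * (1 - F x) * G (β x) :=
  stmt_10_general x₀ F f hFderiv hfcont hfpos hF1 C hC β hβ G g hGderiv hgcont hGnn hψ
end
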